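/- A lattice L can be embedded into Co(P) for some poset P of length at most 2 if and only if L satisfies the identities (L2), (U), and (B). -/

import Mathlib

/-! Common definitions: lattices of order-convex subsets of a poset,
length of a poset, the identities (S), (U), (B), (L2), (H_n), (H_{m,n}),
join-irreducibility, the join-dependency relation, join-seeds,
the posets P_{I,J}, tree-like posets, D-closed sets,
and complete lattice congruences. -/

open Set

/-- The lattice `Co P` of all order-convex subsets of a poset `P`. -/
def Co (P : Type*) [PartialOrder P] : Type _ := {s : Set P // s.OrdConnected}

namespace Co

variable {P : Type*} [PartialOrder P]

instance : PartialOrder (Co P) := Subtype.partialOrder _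

instance : InfSet (Co P) :=
  ⟨fun S => ⟨⋂ s ∈ S, s.1, Set.ordConnected_biInter fun s _ => s.2⟩⟩

noncomputable instance : CompleteLattice (Co P) :=
  completeLatticeOfInf (Co P) (by
    intro S
    constructor
    · intro t ht
      exact Set.biInter_subset_of_mem (t := fun s => s.1) ht
    · intro b hb
      exact Set.subset_iInter₂ fun t ht => hb ht)

/-- The order-convex subset of `P` with underlying set `X`. -/
def mk' (X : Set P) (hX : X.OrdConnected) : Co P := ⟨X, hX⟩

/-- The singleton `{p}`, as an order-convex set. -/
def sngl (p : P) : Co P := ⟨{p}, Set.ordConnected_singleton⟩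

/-- The empty order-convex set. -/
def emp : Co P := ⟨∅, Set.ordConnected_empty⟩

end Co

/-- `lengthLE P n` states that the poset `P` has length at most `n`, that is,
every finite chain of `P` has at most `n + 1` elements. -/
def lengthLE (P : Type*) [PartialOrder P] (n : ℕ) : Prop :=
  ∀ C : Finset P, IsChain (· ≤ ·) (C : Set P) → C.card ≤ n + 1

section Identities

/-- The Stirlitz identity (S). -/
def IdS (L : Type*) [Lattice L] : Prop :=
  ∀ a b b₀ b₁ c : L,
    a ⊓ ((b ⊓ (b₀ ⊔ b₁)) ⊔ c) =
      (a ⊓ (b ⊓ (b₀ ⊔ b₁)))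
      ⊔ (a ⊓ (b₀ ⊔ c) ⊓ ((b ⊓ (b₀ ⊔ b₁) ⊓ (a ⊔ b₀)) ⊔ c))
      ⊔ (a ⊓ (b₁ ⊔ c) ⊓ ((b ⊓ (b₀ ⊔ b₁) ⊓ (a ⊔ b₁)) ⊔ c))

/-- The Udav identity (U). -/
def IdU (L : Type*) [Lattice L] : Prop :=
  ∀ x x₀ x₁ x₂ : L,
    x ⊓ (x₀ ⊔ x₁) ⊓ (x₁ ⊔ x₂) ⊓ (x₀ ⊔ x₂) =
      (x ⊓ x₀ ⊓ (x₁ ⊔ x₂)) ⊔ (x ⊓ x₁ ⊓ (x₀ ⊔ x₂)) ⊔ (x ⊓ x₂ ⊓ (x₀ ⊔ x₁))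

/-- The Bond identity (B). -/
def IdB (L : Type*) [Lattice L] : Prop :=
  ∀ x a₀ a₁ b₀ b₁ : L,
    x ⊓ (a₀ ⊔ a₁) ⊓ (b₀ ⊔ b₁) =
      (x ⊓ a₀ ⊓ (b₀ ⊔ b₁)) ⊔ (x ⊓ a₁ ⊓ (b₀ ⊔ b₁))
      ⊔ (x ⊓ b₀ ⊓ (a₀ ⊔ a₁)) ⊔ (x ⊓ b₁ ⊓ (a₀ ⊔ a₁))
      ⊔ (x ⊓ (a₀ ⊔ a₁) ⊓ (b₀ ⊔ b₁) ⊓ (a₀ ⊔ b₀) ⊓ (a₁ ⊔ b₁))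
      ⊔ (x ⊓ (a₀ ⊔ a₁) ⊓ (b₀ ⊔ b₁) ⊓ (a₀ ⊔ b₁) ⊓ (a₁ ⊔ b₀))

/-- The identity (L₂). -/
def IdL2 (L : Type*) [Lattice L] : Prop :=
  ∀ a b b' c c' : L,
    a ⊓ ((b ⊓ (c ⊔ c')) ⊔ b') =
      (a ⊓ b ⊓ (c ⊔ c')) ⊔ (a ⊓ ((b ⊓ c) ⊔ b')) ⊔ (a ⊓ ((b ⊓ c') ⊔ b'))

variable {L : Type*} [Lattice L]

/-- The lattice polynomial `U_{i,n}` (in the variables `x₀, …, xₙ, x'₁, …, x'ₙ`). -/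
def Upoly (x x' : ℕ → L) (n : ℕ) (i : ℕ) : L :=
  if h : n ≤ i then x n
  else x i ⊓ (Upoly x x' n (i + 1) ⊔ x' (i + 1))
  termination_by n - i
  decreasing_by omega

/-- The lattice polynomial `V_{i,j,n}`. -/
def Vpoly (x x' : ℕ → L) (n i : ℕ) (j : ℕ) : L :=
  if h : i ≤ j then (x i ⊓ Upoly x x' n (i + 1)) ⊔ (x i ⊓ x' (i + 1))
  else x j ⊓ (Vpoly x x' n i (j + 1) ⊔ x' (j + 1))
  termination_by i - j
  decreasing_by omega

/-- The lattice polynomial `W_{i,j,n}`. -/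
def Wpoly (x x' : ℕ → L) (n i : ℕ) (j : ℕ) : L :=
  if h : i ≤ j then
    x i ⊓ (x' (i + 1) ⊔ x' (i + 2)) ⊓ ((Upoly x x' n (i + 1) ⊓ (x i ⊔ x' (i + 2))) ⊔ x' (i + 1))
  else x j ⊓ (Wpoly x x' n i (j + 1) ⊔ x' (j + 1))
  termination_by i - j
  decreasing_by omega

/-- `bigJoin f k = f 0 ⊔ f 1 ⊔ ⋯ ⊔ f k`. -/
def bigJoin (f : ℕ → L) : ℕ → L
  | 0 => f 0
  | k + 1 => bigJoin f k ⊔ f (k + 1)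

end Identities

/-- The identity (Hₙ) : `Uₙ = ⋁_{0 ≤ i ≤ n-1} V_{i,n} ∨ ⋁_{0 ≤ i ≤ n-2} W_{i,n}`
(intended for `n ≥ 1`). -/
def IdH (n : ℕ) (L : Type*) [Lattice L] : Prop :=
  ∀ x x' : ℕ → L,
    Upoly x x' n 0 =
      bigJoin (fun i =>
        if i + 2 ≤ n then Vpoly x x' n i 0 ⊔ Wpoly x x' n i 0 else Vpoly x x' n i 0) (n - 1)

/-- The identity (H_{m,n}) (intended for `m, n ≥ 1`); the common base point is
`x 0 = y 0 = t`. -/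
def IdHmn (m n : ℕ) (L : Type*) [Lattice L] : Prop :=
  ∀ x x' y y' : ℕ → L, x 0 = y 0 →
    Upoly x x' m 0 ⊓ Upoly y y' n 0 =
      bigJoin (fun i =>
          if i + 2 ≤ m then
            (Vpoly x x' m i 0 ⊓ Upoly y y' n 0) ⊔ (Wpoly x x' m i 0 ⊓ Upoly y y' n 0)
          else Vpoly x x' m i 0 ⊓ Upoly y y' n 0) (m - 1)
      ⊔ bigJoin (fun j =>
          if j + 2 ≤ n then
            (Upoly x x' m 0 ⊓ Vpoly y y' n j 0) ⊔ (Upoly x x' m 0 ⊓ Wpoly y y' n j 0)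
          else Upoly x x' m 0 ⊓ Vpoly y y' n j 0) (n - 1)
      ⊔ (Upoly x x' m 0 ⊓ Upoly y y' n 0 ⊓ (x 1 ⊔ y' 1) ⊓ (x' 1 ⊔ y 1))

/-- `p` is join-irreducible: `p = x ⊔ y` implies `p = x` or `p = y`. -/
def JIrr {L : Type*} [Lattice L] (p : L) : Prop :=
  ∀ x y : L, p = x ⊔ y → p = x ∨ p = y

/-- The join-dependency relation `p D q`. -/
def DRel {L : Type*} [Lattice L] (p q : L) : Prop :=
  p ≠ q ∧ ∃ x : L, p ≤ q ⊔ x ∧ ∀ y < q, ¬ p ≤ y ⊔ x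

/-- A subset `S` of a lattice `L` is a join-seed. -/
def JoinSeed (L : Type*) [Lattice L] (S : Set L) : Prop :=
  (∀ p ∈ S, JIrr p) ∧
  (∀ a : L, ∃ T ⊆ S, IsLUB T a) ∧
  (∀ p ∈ S, ∀ a b : L, p ≤ a ⊔ b → ¬ p ≤ a → ¬ p ≤ b →
    ∃ x ∈ S, ∃ y ∈ S, x ≤ a ∧ y ≤ b ∧ p ≤ x ⊔ y ∧
      (∀ x' < x, ¬ p ≤ x' ⊔ y) ∧ (∀ y' < y, ¬ p ≤ x ⊔ y'))

/-- The poset `P_{I,J} = I ∪ {p} ∪ J`, where every element of `I` is below `p`,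
`p` is below every element of `J`, every element of `I` is below every element
of `J`, and there are no other strict comparabilities. -/
def PIJ (I J : Type*) : Type _ := I ⊕ (Unit ⊕ J)

namespace PIJ

variable {I J : Type*}

/-- The rank (height) of an element of `P_{I,J}`. -/
def rank (a : PIJ I J) : ℕ :=
  Sum.elim (fun _ => 0) (Sum.elim (fun _ => 1) fun _ => 2) a

instance : PartialOrder (PIJ I J) where
  le a b := a = b ∨ rank a < rank b
  le_refl a := Or.inl rfl
  le_trans a b c hab hbc := by
    rcases hab with rfl | h
    · exact hbc
    · rcases hbc with rfl | h'
      · exact Or.inr h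
      · exact Or.inr (h.trans h')
  le_antisymm a b hab hba := by
    rcases hab with rfl | h
    · rfl
    · rcases hba with rfl | h'
      · rfl
      · omega

end PIJ

/-- A poset is tree-like if it has no infinite bounded chain and between any two
points there is at most one repetition-free finite path with respect to the
covering relation. -/
def TreeLike (P : Type*) [PartialOrder P] : Prop :=
  (∀ C : Set P, IsChain (· ≤ ·) C → BddAbove C → BddBelow C → C.Finite) ∧
  (∀ a b : P, ∀ l₁ l₂ : List P,
    l₁.Nodup → l₁.head? = some a → l₁.getLast? = some b →
      l₁.Chain' (fun u v => u ⋖ v ∨ v ⋖ u) →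
    l₂.Nodup → l₂.head? = some a → l₂.getLast? = some b →
      l₂.Chain' (fun u v => u ⋖ v ∨ v ⋖ u) →
    l₁ = l₂)

/-- A subset `U` of a poset `P` is `D`-closed. -/
def DClosed {P : Type*} [PartialOrder P] (U : Set P) : Prop :=
  ∀ x p y : P, x < p → p < y → (x ∈ U ∨ y ∈ U) → p ∈ U

/-- A complete congruence of a complete lattice. -/
structure IsCompleteCongr {L : Type*} [CompleteLattice L] (θ : L → L → Prop) : Prop where
  refl : ∀ x, θ x x
  symm : ∀ {x y}, θ x y → θ y x
  trans : ∀ {x y z}, θ x y → θ y z → θ x z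
  sup : ∀ {a b c d}, θ a b → θ c d → θ (a ⊔ c) (b ⊔ d)
  inf : ∀ {a b c d}, θ a b → θ c d → θ (a ⊓ c) (b ⊓ d)
  cSup : ∀ (x : L) (Y : Set L), Y.Nonempty → (∀ y ∈ Y, θ x y) → θ x (sSup Y)
  cInf : ∀ (x : L) (Y : Set L), Y.Nonempty → (∀ y ∈ Y, θ x y) → θ x (sInf Y)

/-- The map `h_U : Co(P) → Co(P ∖ U)`, `X ↦ X ∖ U`. -/
def coRestrict {P : Type*} [PartialOrder P] (U : Set P) (X : Co P) :
    Co {p : P // p ∉ U} :=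
  ⟨Subtype.val ⁻¹' X.1, by
    constructor
    rintro a ha b hb z hz
    exact X.2.out ha hb ⟨hz.1, hz.2⟩⟩

/-- The lattice `D(P)` of all `D`-closed subsets of a poset `P`. -/
def DSub (P : Type*) [PartialOrder P] : Type _ := {U : Set P // DClosed U}

namespace DSub

variable {P : Type*} [PartialOrder P]

instance : PartialOrder (DSub P) := Subtype.partialOrder _

instance : InfSet (DSub P) :=
  ⟨fun S => ⟨⋂ U ∈ S, U.1, by
    intro x p y h1 h2 h3
    simp only [Set.mem_iInter] at h3 ⊢
    intro U hU
    exact U.2 x p y h1 h2 (h3.imp (fun h => h U hU) fun h => h U hU)⟩⟩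

noncomputable instance : CompleteLattice (DSub P) :=
  completeLatticeOfInf (DSub P) (by
    intro S
    constructor
    · intro t ht
      exact Set.biInter_subset_of_mem (t := fun U => U.1) ht
    · intro b hb
      exact Set.subset_iInter₂ fun t ht => hb ht)

end DSub

/-!
For an order-convex `X`, `z ∈ X` iff `z ∈ upperClosure X ∩ lowerClosure X`, and `z ∈ X ⊔ Y` iff
`z ∈ upperClosure (X ∪ Y) ∩ lowerClosure (X ∪ Y)`. Rewritten in these atoms, (U) and (B) in `Co P`
become propositional tautologies; (L₂) needs one more case split, whose bad case produces a chain
of four points. The identities pass to sublattices.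

Conversely, for `a ≰ b` take a filter `F` maximal with `a ∈ F`, `b ∉ F`. Every `c ∉ F` has some
`f ∈ F` with `f ⊓ c ≤ b`, so no identity can have its left side in `F` while each joinand on its
right lies below such an `f ⊓ c`. If `F` is not prime, fix `u₀ ⊔ v₀ ∈ F` with `u₀, v₀ ∉ F`. Then
(B) aligns every other `u ⊔ v ∈ F` with `u, v ∉ F` with it (`u ⊔ u₀, v ⊔ v₀ ∈ F` or crosswise),
(U) rules out `c ∉ F` with `c ⊔ u₀, c ⊔ v₀ ∈ F`, and (L₂) extends each `u ∉ F` with `u ⊔ v₀ ∈ F`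
to a prime filter all of whose elements `x` satisfy `x ⊔ v₀ ∈ F`. Prime filters at the bottom and
the top and such filters `F` in the middle, with the prime filters of the two kinds below and above
them, form a poset of length two, and `a ↦ {p | a ∈ p}` embeds `L` into its convex sets.
-/

open Function

section Identities

variable {L M : Type*} [Lattice L] [Lattice M]

theorem IdL2.of_injective (h : IdL2 M) (f : LatticeHom L M) (hf : Injective f) : IdL2 L :=
  fun a b b' c c' => hf <| by simpa only [map_inf, map_sup] using h (f a) (f b) (f b') (f c) (f c')

theorem IdU.of_injective (h : IdU M) (f : LatticeHom L M) (hf : Injective f) : IdU L :=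
  fun x x₀ x₁ x₂ => hf <| by simpa only [map_inf, map_sup] using h (f x) (f x₀) (f x₁) (f x₂)

theorem IdB.of_injective (h : IdB M) (f : LatticeHom L M) (hf : Injective f) : IdB L :=
  fun x a₀ a₁ b₀ b₁ => hf <| by
    simpa only [map_inf, map_sup] using h (f x) (f a₀) (f a₁) (f b₀) (f b₁)

end Identities

section Length

variable {P : Type*} [PartialOrder P]

theorem lengthLE_of_strictMono {n : ℕ} (r : P → ℕ) (hr : StrictMono r) (hn : ∀ p, r p ≤ n) :
    lengthLE P n := by
  intro C hC
  have hinj : Set.InjOn r C := fun p hp q hq hpq => by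
    by_contra hne
    rcases hC hp hq hne with h | h
    · exact (hr (h.lt_of_ne hne)).ne hpq
    · exact (hr (h.lt_of_ne (Ne.symm hne))).ne hpq.symm
  simpa using Finset.card_le_card_of_injOn r (t := Finset.range (n + 1))
    (fun p _ => by simpa [Nat.lt_succ_iff] using hn p) hinj

theorem lengthLE.not_strictMono {n : ℕ} (h : lengthLE P n) (f : Fin (n + 2) → P) :
    ¬ StrictMono f := by
  classical
  intro hf
  have := h (Finset.univ.image f) (by simpa using hf.monotone.isChain_range)
  rw [Finset.card_image_of_injective _ hf.injective, Finset.card_univ, Fintype.card_fin] at this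
  omega

variable {u z w : P}

theorem lengthLE.isMin_of_lt_of_lt (h : lengthLE P 2) (huz : u < z) (hzw : z < w) : IsMin u :=
  fun s hsu => by_contra fun hus => h.not_strictMono ![s, u, z, w] <| by
    simp [lt_of_le_not_ge hsu hus, huz, hzw]

theorem lengthLE.isMax_of_lt_of_lt (h : lengthLE P 2) (huz : u < z) (hzw : z < w) : IsMax w :=
  fun s hws => by_contra fun hsw => h.not_strictMono ![u, z, w, s] <| by
    simp [lt_of_le_not_ge hws hsw, huz, hzw]

end Length

namespace Co

variable {P : Type*} [PartialOrder P] {X Y : Co P} {u v z : P}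

theorem coe_inf (X Y : Co P) : (X ⊓ Y).1 = X.1 ∩ Y.1 := by
  show (⋂ s ∈ ({X, Y} : Set (Co P)), s.1) = _
  simp

theorem mem_inf : z ∈ (X ⊓ Y).1 ↔ z ∈ X.1 ∧ z ∈ Y.1 :=
  Set.ext_iff.1 (coe_inf X Y) z

theorem coe_sup (X Y : Co P) :
    (X ⊔ Y).1 = (upperClosure (X.1 ∪ Y.1) : Set P) ∩ lowerClosure (X.1 ∪ Y.1) := by
  have hconv : ((upperClosure (X.1 ∪ Y.1) : Set P) ∩ lowerClosure (X.1 ∪ Y.1)).OrdConnected :=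
    (UpperSet.upper _).ordConnected.inter (LowerSet.lower _).ordConnected
  have hsub : X.1 ∪ Y.1 ⊆ (X ⊔ Y).1 :=
    Set.union_subset (le_sup_left : X ≤ X ⊔ Y) (le_sup_right : Y ≤ X ⊔ Y)
  refine subset_antisymm ?_ ?_
  · exact (sup_le (a := X) (b := Y) (c := ⟨_, hconv⟩)
      (fun z hz => ⟨subset_upperClosure (.inl hz), subset_lowerClosure (.inl hz)⟩)
      (fun z hz => ⟨subset_upperClosure (.inr hz), subset_lowerClosure (.inr hz)⟩) :)
  · rw [← (X ⊔ Y).2.upperClosure_inter_lowerClosure]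
    exact Set.inter_subset_inter (upperClosure_anti hsub) (lowerClosure_mono hsub)

theorem mem_iff_upperClosure_lowerClosure : z ∈ X.1 ↔ z ∈ upperClosure X.1 ∧ z ∈ lowerClosure X.1 :=
  (Set.ext_iff.1 X.2.upperClosure_inter_lowerClosure z).symm

theorem mem_sup : z ∈ (X ⊔ Y).1 ↔
    (z ∈ upperClosure X.1 ∨ z ∈ upperClosure Y.1) ∧
      (z ∈ lowerClosure X.1 ∨ z ∈ lowerClosure Y.1) := by
  rw [coe_sup, upperClosure_union, lowerClosure_union]
  rfl

theorem mem_sup_of_le_of_le (hu : u ∈ X.1 ∪ Y.1) (hv : v ∈ X.1 ∪ Y.1) (huz : u ≤ z)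
    (hzv : z ≤ v) : z ∈ (X ⊔ Y).1 :=
  coe_sup X Y ▸ ⟨⟨u, hu, huz⟩, ⟨v, hv, hzv⟩⟩

theorem mem_sup_of_mem_or (h : z ∈ X.1 ∨ z ∈ Y.1) : z ∈ (X ⊔ Y).1 :=
  mem_sup_of_le_of_le h h le_rfl le_rfl

theorem mem_or_mem_of_mem_sup_of_isMin (hz : IsMin z) (h : z ∈ (X ⊔ Y).1) :
    z ∈ X.1 ∨ z ∈ Y.1 := by
  obtain ⟨⟨u, hu, huz⟩, -⟩ := coe_sup X Y ▸ h
  exact hz.eq_of_le huz ▸ hu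

theorem mem_or_mem_of_mem_sup_of_isMax (hz : IsMax z) (h : z ∈ (X ⊔ Y).1) :
    z ∈ X.1 ∨ z ∈ Y.1 := by
  obtain ⟨-, ⟨v, hv, hzv⟩⟩ := coe_sup X Y ▸ h
  exact hz.eq_of_ge hzv ▸ hv

theorem idU : IdU (Co P) := by
  intro X X₀ X₁ X₂
  refine le_antisymm (fun z hz => ?_) (by order)
  refine mem_sup_of_mem_or (.imp_left mem_sup_of_mem_or ?_)
  simp only [coe_inf, Set.mem_inter_iff, mem_sup] at hz ⊢
  simp only [mem_iff_upperClosure_lowerClosure] at hz ⊢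
  grind

theorem idB : IdB (Co P) := by
  intro X A₀ A₁ B₀ B₁
  refine le_antisymm (fun z hz => ?_) (by order)
  apply mem_sup_of_mem_or
  iterate 4 (refine .imp_left mem_sup_of_mem_or ?_; rw [or_assoc])
  simp only [coe_inf, Set.mem_inter_iff, mem_sup] at hz ⊢
  simp only [mem_iff_upperClosure_lowerClosure] at hz ⊢
  grind (splits := 40)

theorem coe_inf_sup_sup_subset (h : lengthLE P 2) (B B' C C' : Co P) :
    ((B ⊓ (C ⊔ C')) ⊔ B').1 ⊆ (B ⊓ (C ⊔ C')).1 ∪ ((B ⊓ C) ⊔ B').1 ∪ ((B ⊓ C') ⊔ B').1 := by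
  intro z hz
  by_cases hzM : z ∈ (B ⊓ (C ⊔ C')).1
  · exact .inl (.inl hzM)
  by_cases hzB' : z ∈ B'.1
  · exact .inl (.inr (mem_sup_of_mem_or (.inr hzB')))
  have hne {u} (hu : u ∈ (B ⊓ (C ⊔ C')).1 ∪ B'.1) : u ≠ z := fun e =>
    hu.elim (fun hu => hzM (e ▸ hu)) fun hu => hzB' (e ▸ hu)
  rw [mem_iff_upperClosure_lowerClosure] at hzM hzB'
  rw [mem_sup] at hz
  obtain ⟨⟨u, hu, huz⟩, ⟨w, hw, hzw⟩⟩ | ⟨⟨u, hu, huz⟩, ⟨w, hw, hzw⟩⟩ :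
      (z ∈ upperClosure (B ⊓ (C ⊔ C')).1 ∧ z ∈ lowerClosure B'.1) ∨
        (z ∈ upperClosure B'.1 ∧ z ∈ lowerClosure (B ⊓ (C ⊔ C')).1) := by
    tauto
  · have hmin : IsMin u := h.isMin_of_lt_of_lt (huz.lt_of_ne (hne (.inl hu)))
      (hzw.lt_of_ne (hne (.inr hw)).symm)
    rw [mem_inf] at hu
    rcases mem_or_mem_of_mem_sup_of_isMin hmin hu.2 with hC | hC
    · exact .inl (.inr (mem_sup_of_le_of_le (.inl (mem_inf.2 ⟨hu.1, hC⟩)) (.inr hw) huz hzw))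
    · exact .inr (mem_sup_of_le_of_le (.inl (mem_inf.2 ⟨hu.1, hC⟩)) (.inr hw) huz hzw)
  · have hmax : IsMax w := h.isMax_of_lt_of_lt (huz.lt_of_ne (hne (.inr hu)))
      (hzw.lt_of_ne (hne (.inl hw)).symm)
    rw [mem_inf] at hw
    rcases mem_or_mem_of_mem_sup_of_isMax hmax hw.2 with hC | hC
    · exact .inl (.inr (mem_sup_of_le_of_le (.inr hu) (.inl (mem_inf.2 ⟨hw.1, hC⟩)) huz hzw))
    · exact .inr (mem_sup_of_le_of_le (.inr hu) (.inl (mem_inf.2 ⟨hw.1, hC⟩)) huz hzw)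

theorem idL2 (h : lengthLE P 2) : IdL2 (Co P) := by
  intro A B B' C C'
  refine le_antisymm (fun z hz => ?_) (by order)
  refine mem_sup_of_mem_or (.imp_left mem_sup_of_mem_or ?_)
  rw [coe_inf, Set.mem_inter_iff] at hz
  have := coe_inf_sup_sup_subset h B B' C C' hz.2
  simp only [coe_inf, Set.mem_inter_iff, Set.mem_union] at this ⊢
  tauto

end Co

section Filters

variable {L : Type*} [Lattice L]

structure IsLatticeFilter (F : Set L) : Prop where
  isUpperSet : IsUpperSet F
  infClosed : InfClosed F

structure IsPrimeLatticeFilter (F : Set L) : Prop extends IsLatticeFilter F where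
  mem_or_mem : ∀ ⦃u v⦄, u ⊔ v ∈ F → u ∈ F ∨ v ∈ F

theorem IsLatticeFilter.inf_mem_iff {F : Set L} (hF : IsLatticeFilter F) {x y : L} :
    x ⊓ y ∈ F ↔ x ∈ F ∧ y ∈ F :=
  ⟨fun h => ⟨hF.isUpperSet inf_le_left h, hF.isUpperSet inf_le_right h⟩,
    fun h => hF.infClosed h.1 h.2⟩

variable {Q : Set L} {u : L}

theorem exists_maximal_isLatticeFilter (hQ : IsUpperSet Q) (hu : u ∈ Q) :
    ∃ F, Maximal (fun G => IsLatticeFilter G ∧ u ∈ G ∧ G ⊆ Q) F := by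
  refine (zorn_subset_nonempty {G | IsLatticeFilter G ∧ u ∈ G ∧ G ⊆ Q} ?_ (Set.Ici u)
    ⟨⟨isUpperSet_Ici u, fun _ hx _ hy => le_inf hx hy⟩, le_rfl, fun _ hx => hQ hx hu⟩).imp
    fun _ hF => hF.2
  rintro c hc hchain ⟨G, hG⟩
  refine ⟨⋃₀ c, ⟨⟨isUpperSet_sUnion fun G hG => (hc hG).1.isUpperSet, ?_⟩,
    ⟨G, hG, (hc hG).2.1⟩, Set.sUnion_subset fun G hG => (hc hG).2.2⟩,
    fun G hG => Set.subset_sUnion_of_mem hG⟩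
  rintro x ⟨G₁, hG₁, hx⟩ y ⟨G₂, hG₂, hy⟩
  rcases hchain.total hG₁ hG₂ with h | h
  · exact ⟨G₂, hG₂, (hc hG₂).1.infClosed (h hx) hy⟩
  · exact ⟨G₁, hG₁, (hc hG₁).1.infClosed hx (h hy)⟩

theorem exists_inf_notMem_of_maximal (hQ : IsUpperSet Q) {F : Set L}
    (hF : Maximal (fun G => IsLatticeFilter G ∧ u ∈ G ∧ G ⊆ Q) F) {c : L} (hc : c ∉ F) :
    ∃ f ∈ F, f ⊓ c ∉ Q := by
  by_contra! h
  obtain ⟨⟨hFfilter, huF, -⟩, hmax⟩ := hF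
  have hgen : IsLatticeFilter {x | ∃ f ∈ F, f ⊓ c ≤ x} := by
    refine ⟨fun x y hxy ⟨f, hf, hfx⟩ => ⟨f, hf, hfx.trans hxy⟩, ?_⟩
    rintro x ⟨f, hf, hfx⟩ y ⟨g, hg, hgy⟩
    exact ⟨f ⊓ g, hFfilter.infClosed hf hg, by order⟩
  have := hmax ⟨hgen, ⟨u, huF, inf_le_left⟩, fun x ⟨f, hf, hfx⟩ => hQ hfx (h f hf)⟩
    fun f hf => ⟨f, hf, inf_le_left⟩
  exact hc (this ⟨u, huF, inf_le_right⟩)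

/-- `exists_inf_le` says that the filter generated by `F` and any `c ∉ F` contains `b`. -/
structure IsMaxFilterAvoiding (F : Set L) (b : L) : Prop extends IsLatticeFilter F where
  notMem : b ∉ F
  exists_inf_le : ∀ c ∉ F, ∃ f ∈ F, f ⊓ c ≤ b

theorem exists_isMaxFilterAvoiding {a b : L} (h : ¬ a ≤ b) :
    ∃ F, a ∈ F ∧ IsMaxFilterAvoiding F b := by
  have hQ : IsUpperSet {x | ¬ x ≤ b} := fun x y hxy hx hy => hx (hxy.trans hy)
  obtain ⟨F, hF⟩ := exists_maximal_isLatticeFilter hQ h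
  refine ⟨F, hF.1.2.1, hF.1.1, fun hb => hF.1.2.2 hb le_rfl, fun c hc => ?_⟩
  simpa using exists_inf_notMem_of_maximal hQ hF hc

namespace IsMaxFilterAvoiding

variable {F : Set L} {b : L}

theorem not_le (hF : IsMaxFilterAvoiding F b) {z : L} (hz : z ∈ F) : ¬ z ≤ b :=
  fun h => hF.notMem (hF.isUpperSet h hz)

theorem exists_forall_inf_le (hF : IsMaxFilterAvoiding F b) (l : List L) (hl : ∀ c ∈ l, c ∉ F) :
    ∃ f ∈ F, ∀ c ∈ l, f ⊓ c ≤ b := by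
  induction l with
  | nil =>
    obtain ⟨f, hf, -⟩ := hF.exists_inf_le b hF.notMem
    exact ⟨f, hf, by simp⟩
  | cons c l ih =>
    simp only [List.mem_cons, forall_eq_or_imp] at hl ⊢
    obtain ⟨f, hf, hfl⟩ := ih hl.2
    obtain ⟨g, hg, hgc⟩ := hF.exists_inf_le c hl.1
    exact ⟨f ⊓ g, hF.infClosed hf hg, by order, fun d hd => (hfl d hd).trans' (by order)⟩

theorem sup_notMem_of_sup_mem_of_sup_mem (hF : IsMaxFilterAvoiding F b) (hU : IdU L)
    {x₀ x₁ x₂ : L} (h₀ : x₀ ∉ F) (h₁ : x₁ ∉ F) (h₂ : x₂ ∉ F) (h₀₁ : x₀ ⊔ x₁ ∈ F)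
    (h₁₂ : x₁ ⊔ x₂ ∈ F) : x₀ ⊔ x₂ ∉ F := by
  intro h₀₂
  obtain ⟨f, hfF, hf⟩ := hF.exists_forall_inf_le [x₀, x₁, x₂] (by simp [*])
  simp only [List.mem_cons, List.not_mem_nil, or_false, forall_eq_or_imp, forall_eq] at hf
  refine hF.not_le (hF.infClosed (hF.infClosed (hF.infClosed hfF h₀₁) h₁₂) h₀₂) ?_
  rw [hU]
  order

theorem sup_mem_and_sup_mem_or_sup_mem_and_sup_mem (hF : IsMaxFilterAvoiding F b) (hB : IdB L)
    {a₀ a₁ b₀ b₁ : L} (ha₀ : a₀ ∉ F) (ha₁ : a₁ ∉ F) (hb₀ : b₀ ∉ F) (hb₁ : b₁ ∉ F)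
    (ha : a₀ ⊔ a₁ ∈ F) (hb : b₀ ⊔ b₁ ∈ F) :
    (a₀ ⊔ b₀ ∈ F ∧ a₁ ⊔ b₁ ∈ F) ∨ (a₀ ⊔ b₁ ∈ F ∧ a₁ ⊔ b₀ ∈ F) := by
  simp only [← hF.inf_mem_iff]
  by_contra! h
  obtain ⟨f, hfF, hf⟩ := hF.exists_forall_inf_le
    [a₀, a₁, b₀, b₁, (a₀ ⊔ b₀) ⊓ (a₁ ⊔ b₁), (a₀ ⊔ b₁) ⊓ (a₁ ⊔ b₀)] (by simp [*])
  simp only [List.mem_cons, List.not_mem_nil, or_false, forall_eq_or_imp, forall_eq] at hf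
  refine hF.not_le (hF.infClosed (hF.infClosed hfF ha) hb) ?_
  rw [hB]
  order

theorem exists_isPrimeLatticeFilter (hF : IsMaxFilterAvoiding F b) (hL2 : IdL2 L) {u v : L}
    (hu : u ∉ F) (huv : u ⊔ v ∈ F) :
    ∃ G, IsPrimeLatticeFilter G ∧ u ∈ G ∧ ∀ x ∈ G, x ⊔ v ∈ F := by
  have hQ : IsUpperSet {x | x ⊔ v ∈ F} := fun x y hxy hx =>
    hF.isUpperSet (sup_le_sup_right hxy v) hx
  obtain ⟨G, hG⟩ := exists_maximal_isLatticeFilter hQ huv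
  obtain ⟨hGfilter, huG, hGQ⟩ := hG.1
  refine ⟨G, ⟨hGfilter, fun c₀ c₁ hc => ?_⟩, huG, hGQ⟩
  by_contra! hc'
  obtain ⟨g₀, hg₀, hgc₀⟩ := exists_inf_notMem_of_maximal hQ hG hc'.1
  obtain ⟨g₁, hg₁, hgc₁⟩ := exists_inf_notMem_of_maximal hQ hG hc'.2
  -- `g ≤ u` keeps `g ⊓ (c₀ ⊔ c₁)` out of `F`.
  obtain ⟨g, hgG, hg⟩ : ∃ g ∈ G, g ≤ g₀ ⊓ g₁ ⊓ u :=
    ⟨_, hGfilter.infClosed (hGfilter.infClosed hg₀ hg₁) huG, le_rfl⟩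
  have hy : g ⊓ (c₀ ⊔ c₁) ∉ F := fun h => hu (hF.isUpperSet (by order) h)
  have hy₀ : g ⊓ c₀ ⊔ v ∉ F := fun h => hgc₀ (hF.isUpperSet (by order) h)
  have hy₁ : g ⊓ c₁ ⊔ v ∉ F := fun h => hgc₁ (hF.isUpperSet (by order) h)
  obtain ⟨f, hfF, hf⟩ := hF.exists_forall_inf_le [g ⊓ (c₀ ⊔ c₁), g ⊓ c₀ ⊔ v, g ⊓ c₁ ⊔ v]
    (by simp [*])
  simp only [List.mem_cons, List.not_mem_nil, or_false, forall_eq_or_imp, forall_eq] at hf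
  refine hF.not_le (hF.infClosed hfF (hGQ (hGfilter.infClosed hgG hc))) ?_
  rw [hL2]
  order

end IsMaxFilterAvoiding

end Filters

section Representation

variable {L : Type*} [Lattice L]

def PrimeFilter (L : Type*) [Lattice L] : Type _ := {G : Set L // IsPrimeLatticeFilter G}

/-- `inter_subset` makes `{p | a ∈ p}` order-convex in the representing poset, where `lower` and
`upper` are the prime filters placed below and above; `sup_mem` makes it preserve joins. -/
structure MidPoint (L : Type*) [Lattice L] where
  carrier : Set L
  isLatticeFilter : IsLatticeFilter carrier
  lower : Set (PrimeFilter L)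
  upper : Set (PrimeFilter L)
  inter_subset : ∀ G ∈ lower, ∀ H ∈ upper, G.1 ∩ H.1 ⊆ carrier
  sup_mem : ∀ ⦃u v⦄, u ⊔ v ∈ carrier → u ∈ carrier ∨ v ∈ carrier ∨
    ∃ G ∈ lower, ∃ H ∈ upper, (u ∈ G.1 ∧ v ∈ H.1) ∨ (v ∈ G.1 ∧ u ∈ H.1)

namespace MidPoint

variable {F : Set L}

def ofPrime (hF : IsPrimeLatticeFilter F) : MidPoint L where
  carrier := F
  isLatticeFilter := hF.toIsLatticeFilter
  lower := ∅
  upper := ∅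
  inter_subset := by simp
  sup_mem _ _ h := (hF.mem_or_mem h).imp_right .inl

def ofMaxFilterAvoiding (hL2 : IdL2 L) (hU : IdU L) (hB : IdB L) {b u₀ v₀ : L}
    (hF : IsMaxFilterAvoiding F b) (hu₀ : u₀ ∉ F) (hv₀ : v₀ ∉ F) (h : u₀ ⊔ v₀ ∈ F) :
    MidPoint L where
  carrier := F
  isLatticeFilter := hF.toIsLatticeFilter
  lower := {G | ∀ x ∈ G.1, x ⊔ v₀ ∈ F}
  upper := {H | ∀ x ∈ H.1, x ⊔ u₀ ∈ F}
  inter_subset G hG H hH c hc := by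
    by_contra hcF
    exact hF.sup_notMem_of_sup_mem_of_sup_mem hU hcF hu₀ hv₀ (hH c hc.2) h (hG c hc.1)
  sup_mem u v huv := by
    by_cases hu : u ∈ F
    · exact .inl hu
    by_cases hv : v ∈ F
    · exact .inr (.inl hv)
    refine .inr (.inr ?_)
    rcases hF.sup_mem_and_sup_mem_or_sup_mem_and_sup_mem hB hu hv hu₀ hv₀ huv h with
      ⟨huu₀, hvv₀⟩ | ⟨huv₀, hvu₀⟩
    · obtain ⟨G, hG, hvG, hGF⟩ := hF.exists_isPrimeLatticeFilter hL2 hv hvv₀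
      obtain ⟨H, hH, huH, hHF⟩ := hF.exists_isPrimeLatticeFilter hL2 hu huu₀
      exact ⟨⟨G, hG⟩, hGF, ⟨H, hH⟩, hHF, .inr ⟨hvG, huH⟩⟩
    · obtain ⟨G, hG, huG, hGF⟩ := hF.exists_isPrimeLatticeFilter hL2 hu huv₀
      obtain ⟨H, hH, hvH, hHF⟩ := hF.exists_isPrimeLatticeFilter hL2 hv hvu₀
      exact ⟨⟨G, hG⟩, hGF, ⟨H, hH⟩, hHF, .inl ⟨huG, hvH⟩⟩

theorem exists_mem_notMem (hL2 : IdL2 L) (hU : IdU L) (hB : IdB L) {a b : L} (h : ¬ a ≤ b) :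
    ∃ m : MidPoint L, a ∈ m.carrier ∧ b ∉ m.carrier := by
  obtain ⟨F, haF, hF⟩ := exists_isMaxFilterAvoiding h
  by_cases hprime : ∀ ⦃u v⦄, u ⊔ v ∈ F → u ∈ F ∨ v ∈ F
  · exact ⟨ofPrime ⟨hF.toIsLatticeFilter, hprime⟩, haF, hF.notMem⟩
  · push Not at hprime
    obtain ⟨u₀, v₀, h, hu₀, hv₀⟩ := hprime
    exact ⟨ofMaxFilterAvoiding hL2 hU hB hF hu₀ hv₀ h, haF, hF.notMem⟩

end MidPoint

inductive Point (L : Type*) [Lattice L]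
  | low (G : PrimeFilter L)
  | mid (m : MidPoint L)
  | high (H : PrimeFilter L)

namespace Point

def le : Point L → Point L → Prop
  | low G, low G' => G = G'
  | low G, mid m => G ∈ m.lower
  | low _, high _ => True
  | mid m, mid m' => m = m'
  | mid m, high H => H ∈ m.upper
  | high H, high H' => H = H'
  | _, _ => False

instance : PartialOrder (Point L) where
  le := le
  le_refl p := by cases p <;> simp [le]
  le_trans p q r hpq hqr := by cases p <;> cases q <;> cases r <;> simp_all [le]
  le_antisymm p q hpq hqp := by cases p <;> cases q <;> simp_all [le]

theorem le_iff {p q : Point L} : p ≤ q ↔ p.le q := Iff.rfl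

def rank : Point L → ℕ
  | low _ => 0
  | mid _ => 1
  | high _ => 2

theorem rank_strictMono : StrictMono (rank : Point L → ℕ) := by
  intro p q h
  rw [lt_iff_le_and_ne] at h
  cases p <;> cases q <;> simp_all [le_iff, le, rank]

theorem lengthLE_two : lengthLE (Point L) 2 :=
  lengthLE_of_strictMono rank rank_strictMono fun p => by cases p <;> simp [rank]

def carrier : Point L → Set L
  | low G => G.1
  | mid m => m.carrier
  | high H => H.1

theorem isLatticeFilter_carrier (p : Point L) : IsLatticeFilter p.carrier := by
  cases p with
  | low G => exact G.2.toIsLatticeFilter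
  | mid m => exact m.isLatticeFilter
  | high H => exact H.2.toIsLatticeFilter

theorem ordConnected_setOf_mem_carrier (a : L) : {p : Point L | a ∈ p.carrier}.OrdConnected := by
  refine ⟨fun p hp q hq r ⟨hpr, hrq⟩ => ?_⟩
  rcases p with G | _ | _ <;> rcases r with _ | m | _ <;> rcases q with _ | _ | H <;>
    simp_all [le_iff, le, carrier]
  exact m.inter_subset G hpr H hrq ⟨hp, hq⟩

def represent (a : L) : Co (Point L) := ⟨{p | a ∈ p.carrier}, ordConnected_setOf_mem_carrier a⟩

theorem represent_mono {a b : L} (h : a ≤ b) : represent a ≤ represent b :=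
  fun p hp => p.isLatticeFilter_carrier.isUpperSet h hp

theorem represent_inf (a b : L) : represent (a ⊓ b) = represent a ⊓ represent b :=
  Subtype.ext <| Set.ext fun p => p.isLatticeFilter_carrier.inf_mem_iff.trans
    (Co.mem_inf (X := represent a) (Y := represent b)).symm

theorem represent_sup (a b : L) : represent (a ⊔ b) = represent a ⊔ represent b := by
  refine le_antisymm (fun p hp => ?_)
    (sup_le (represent_mono le_sup_left) (represent_mono le_sup_right))
  cases p with
  | low G => exact Co.mem_sup_of_mem_or (G.2.mem_or_mem hp)
  | high H => exact Co.mem_sup_of_mem_or (H.2.mem_or_mem hp)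
  | mid m =>
    rcases m.sup_mem hp with h | h | ⟨G, hG, H, hH, ⟨ha, hb⟩ | ⟨hb, ha⟩⟩
    · exact Co.mem_sup_of_mem_or (.inl h)
    · exact Co.mem_sup_of_mem_or (.inr h)
    · exact Co.mem_sup_of_le_of_le (u := low G) (v := high H) (.inl ha) (.inr hb) hG hH
    · exact Co.mem_sup_of_le_of_le (u := low G) (v := high H) (.inr hb) (.inl ha) hG hH

def representHom : LatticeHom L (Co (Point L)) where
  toFun := represent
  map_sup' := represent_sup
  map_inf' := represent_inf


theorem representHom_injective (hL2 : IdL2 L) (hU : IdU L) (hB : IdB L) :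
    Injective (representHom : LatticeHom L (Co (Point L))) := by
  have hle {a b : L} (h : represent a ≤ represent b) : a ≤ b := by
    by_contra hab
    obtain ⟨m, ha, hb⟩ := MidPoint.exists_mem_notMem hL2 hU hB hab
    exact hb (h (show mid m ∈ (represent a).1 from ha))
  exact fun a b h => le_antisymm (hle h.le) (hle h.ge)

end Point

end Representation

theorem stmt1.{u} (L : Type u) [Lattice L] :
    (∃ (P : Type u) (_ : PartialOrder P), lengthLE P 2 ∧
        ∃ f : LatticeHom L (Co P), Function.Injective f) ↔
      (IdL2 L ∧ IdU L ∧ IdB L) := by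
  constructor
  · rintro ⟨P, _, hP, f, hf⟩
    exact ⟨(Co.idL2 hP).of_injective f hf, Co.idU.of_injective f hf, Co.idB.of_injective f hf⟩
  · rintro ⟨hL2, hU, hB⟩
    exact ⟨Point L, inferInstance, Point.lengthLE_two, Point.representHom,
      Point.representHom_injective hL2 hU hB⟩
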